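/- arXiv:2303.15170 — 7 statements merged into one kernel-verified Lean document; each statement's English description precedes it below -/
import Mathlib

section
/- In the dynamic panel model y_t = α⁰ + β⁰x_t + ω_t + η_t with ω_t = ρ_ω⁰ω_{t-1} + ξ_t and input process x_t = π⁰ + θ⁰ω_t + κ_t, κ_t = ρ_x⁰κ_{t-1} + u_t (θ⁰ ≠ 0), the ρ-differenced residual evaluated at the pseudo-parameters (α,β,ρ) = (α⁰ − π⁰/θ⁰, β⁰ + 1/θ⁰, ρ_x⁰), namely (y_t − ρ y_{t-1}) − α(1 − ρ) − β(x_t − ρ x_{t-1}), equals −(1/θ⁰)u_t + η_t − ρ_x⁰η_{t-1} identically (as an algebraic identity in the random variables). -/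
/-- `ω` is eliminated through the input equation, leaving the composite error `-(1/θ⁰) κ + η`. -/
lemma outcome_eq_pseudo_model {α0 β0 π0 θ0 y x ω κ η : ℝ} (hθ : θ0 ≠ 0)
    (hy : y = α0 + β0 * x + ω + η) (hx : x = π0 + θ0 * ω + κ) :
    y = (α0 - π0 / θ0) + (β0 + 1 / θ0) * x + (-(1 / θ0) * κ + η) := by
  rw [hy, hx]
  field_simp
  ring

theorem pseudo_solution_residual_general
    (y x ω κ u η : ℤ → ℝ) (α0 β0 π0 θ0 ρx0 : ℝ) (hθ : θ0 ≠ 0)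
    (hy : ∀ t, y t = α0 + β0 * x t + ω t + η t)
    (hx : ∀ t, x t = π0 + θ0 * ω t + κ t)
    (hκ : ∀ t, κ t = ρx0 * κ (t - 1) + u t) :
    ∀ t, (y t - ρx0 * y (t - 1)) - (α0 - π0 / θ0) * (1 - ρx0)
        - (β0 + 1 / θ0) * (x t - ρx0 * x (t - 1))
      = -(1 / θ0) * u t + η t - ρx0 * η (t - 1) := by
  intro t
  rw [outcome_eq_pseudo_model hθ (hy t) (hx t),
    outcome_eq_pseudo_model hθ (hy (t - 1)) (hx (t - 1)), hκ t]
  ring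

/-- Theorem 1 (pseudo-solution residual identity): at the pseudo-parameters
`(α, β, ρ) = (α⁰ − π⁰/θ⁰, β⁰ + 1/θ⁰, ρ_x⁰)`, the ρ-differenced residual equals
`−(1/θ⁰)u_t + η_t − ρ_x⁰ η_{t-1}`. -/
theorem pseudo_solution_residual
    (y x ω κ ξ u η : ℤ → ℝ) (α0 β0 π0 θ0 ρω0 ρx0 : ℝ) (hθ : θ0 ≠ 0)
    (hy : ∀ t, y t = α0 + β0 * x t + ω t + η t)
    (hx : ∀ t, x t = π0 + θ0 * ω t + κ t)
    (hω : ∀ t, ω t = ρω0 * ω (t - 1) + ξ t)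
    (hκ : ∀ t, κ t = ρx0 * κ (t - 1) + u t) :
    ∀ t, (y t - ρx0 * y (t - 1)) - (α0 - π0 / θ0) * (1 - ρx0)
        - (β0 + 1 / θ0) * (x t - ρx0 * x (t - 1))
      = -(1 / θ0) * u t + η t - ρx0 * η (t - 1) :=
  pseudo_solution_residual_general y x ω κ u η α0 β0 π0 θ0 ρx0 hθ hy hx hκ
end

section
/- Suppose ρ_ω⁰ = ρ_x⁰ = ρ⁰ and the innovations ξ_t, u_t, η_t, η_{t-1} all have zero conditional expectation given a σ-algebra I_{t-1}. Then for ANY pair (α, β) satisfying (α⁰ − α)(1 − ρ⁰) + (β⁰ − β)π⁰(1 − ρ⁰) = 0, the conditional moment E[(y_t − ρ⁰y_{t-1}) − α(1 − ρ⁰) − β(x_t − ρ⁰x_{t-1}) | I_{t-1}] equals 0; hence the moment condition has a continuum of solutions when ρ_ω⁰ = ρ_x⁰. -/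
/-!
With a common autoregressive root `ρ⁰`, quasi-differencing `y_t - ρ⁰ y_{t-1}` and
`x_t - ρ⁰ x_{t-1}` removes both persistent components `ω` and `κ`, leaving the residual
`((β⁰ - β) θ⁰ + 1) ξ_t + (β⁰ - β) u_t + η_t - ρ⁰ η_{t-1}` plus the constant
`(α⁰ - α)(1 - ρ⁰) + (β⁰ - β) π⁰ (1 - ρ⁰)`. The constant vanishes on the whole line of
solutions `(α, β)`, and the residual is a linear combination of innovations with zero
conditional mean, so its conditional mean is zero as well.
-/

open MeasureTheory

namespace MeasureTheory

variable {Ω E 𝕜 : Type*} [RCLike 𝕜] [NormedAddCommGroup E] [NormedSpace ℝ E] [NormedSpace 𝕜 E]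
  [CompleteSpace E] {m m0 : MeasurableSpace Ω}

variable (𝕜 m) in
def condExpNullSubmodule (μ : Measure Ω) : Submodule 𝕜 (Ω → E) where
  carrier := {f | Integrable f μ ∧ μ[f | m] =ᵐ[μ] 0}
  add_mem' := fun ⟨hf, hf0⟩ ⟨hg, hg0⟩ =>
    ⟨hf.add hg, (condExp_add hf hg m).trans (by simpa using hf0.add hg0)⟩
  zero_mem' := ⟨integrable_zero _ _ _, by rw [condExp_zero]⟩
  smul_mem' c f := fun ⟨hf, hf0⟩ =>
    ⟨hf.smul c, (condExp_smul c f m).trans (by simpa using hf0.const_smul c)⟩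

end MeasureTheory

theorem quasiDifference_residual_eq {y y1 x x1 ω ω1 κ κ1 ξ u η η1 α0 β0 π0 θ0 ρ0 α β : ℝ}
    (hy : y = α0 + β0 * x + ω + η) (hy1 : y1 = α0 + β0 * x1 + ω1 + η1)
    (hx : x = π0 + θ0 * ω + κ) (hx1 : x1 = π0 + θ0 * ω1 + κ1)
    (hω : ω = ρ0 * ω1 + ξ) (hκ : κ = ρ0 * κ1 + u)
    (hsol : (α0 - α) * (1 - ρ0) + (β0 - β) * (π0 * (1 - ρ0)) = 0) :
    (y - ρ0 * y1) - α * (1 - ρ0) - β * (x - ρ0 * x1)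
      = ((β0 - β) * θ0 + 1) * ξ + (β0 - β) * u + (η - ρ0 * η1) := by
  subst hy hy1 hx hx1 hω hκ
  linear_combination hsol

theorem continuum_of_solutions_when_equal_rho_general
    {Ω : Type*} {m m0 : MeasurableSpace Ω}
    (μ : Measure Ω)
    (yt yt1 xt xt1 ωt ωt1 κt κt1 ξt ut ηt ηt1 : Ω → ℝ)
    (α0 β0 π0 θ0 ρ0 : ℝ)
    (hy : ∀ w, yt w = α0 + β0 * xt w + ωt w + ηt w)
    (hy1 : ∀ w, yt1 w = α0 + β0 * xt1 w + ωt1 w + ηt1 w)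
    (hx : ∀ w, xt w = π0 + θ0 * ωt w + κt w)
    (hx1 : ∀ w, xt1 w = π0 + θ0 * ωt1 w + κt1 w)
    (hω : ∀ w, ωt w = ρ0 * ωt1 w + ξt w)
    (hκ : ∀ w, κt w = ρ0 * κt1 w + ut w)
    (hint_ξ : Integrable ξt μ) (hint_u : Integrable ut μ)
    (hint_η : Integrable ηt μ) (hint_η1 : Integrable ηt1 μ)
    (hξ : μ[ξt | m] =ᵐ[μ] 0) (hu : μ[ut | m] =ᵐ[μ] 0)
    (hη : μ[ηt | m] =ᵐ[μ] 0) (hη1 : μ[ηt1 | m] =ᵐ[μ] 0)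
    (α β : ℝ)
    (hsol : (α0 - α) * (1 - ρ0) + (β0 - β) * (π0 * (1 - ρ0)) = 0) :
    μ[fun w => (yt w - ρ0 * yt1 w) - α * (1 - ρ0)
        - β * (xt w - ρ0 * xt1 w) | m] =ᵐ[μ] 0 := by
  set N := condExpNullSubmodule ℝ m μ (E := ℝ)
  have hresidual : (fun w => (yt w - ρ0 * yt1 w) - α * (1 - ρ0) - β * (xt w - ρ0 * xt1 w))
      = ((β0 - β) * θ0 + 1) • ξt + (β0 - β) • ut + (ηt - ρ0 • ηt1) := by
    funext w
    exact quasiDifference_residual_eq (hy w) (hy1 w) (hx w) (hx1 w) (hω w) (hκ w) hsol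
  have hξN : ξt ∈ N := ⟨hint_ξ, hξ⟩
  have huN : ut ∈ N := ⟨hint_u, hu⟩
  have hηN : ηt ∈ N := ⟨hint_η, hη⟩
  have hη1N : ηt1 ∈ N := ⟨hint_η1, hη1⟩
  rw [hresidual]
  exact (N.add_mem (N.add_mem (N.smul_mem _ hξN) (N.smul_mem _ huN))
    (N.sub_mem hηN (N.smul_mem _ hη1N))).2

/-- When `ρ_ω⁰ = ρ_x⁰ = ρ⁰`, any `(α, β)` with
`(α⁰ − α)(1 − ρ⁰) + (β⁰ − β)π⁰(1 − ρ⁰) = 0` satisfies the conditional moment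
condition: a continuum of solutions. -/
theorem continuum_of_solutions_when_equal_rho
    {Ω : Type*} {m m0 : MeasurableSpace Ω} (hm : m ≤ m0)
    (μ : Measure Ω) [IsProbabilityMeasure μ]
    (yt yt1 xt xt1 ωt ωt1 κt κt1 ξt ut ηt ηt1 : Ω → ℝ)
    (α0 β0 π0 θ0 ρ0 : ℝ)
    (hy : ∀ w, yt w = α0 + β0 * xt w + ωt w + ηt w)
    (hy1 : ∀ w, yt1 w = α0 + β0 * xt1 w + ωt1 w + ηt1 w)
    (hx : ∀ w, xt w = π0 + θ0 * ωt w + κt w)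
    (hx1 : ∀ w, xt1 w = π0 + θ0 * ωt1 w + κt1 w)
    (hω : ∀ w, ωt w = ρ0 * ωt1 w + ξt w)
    (hκ : ∀ w, κt w = ρ0 * κt1 w + ut w)
    (hint_y : Integrable yt μ) (hint_y1 : Integrable yt1 μ)
    (hint_x : Integrable xt μ) (hint_x1 : Integrable xt1 μ)
    (hint_ξ : Integrable ξt μ) (hint_u : Integrable ut μ)
    (hint_η : Integrable ηt μ) (hint_η1 : Integrable ηt1 μ)
    (hξ : μ[ξt | m] =ᵐ[μ] 0) (hu : μ[ut | m] =ᵐ[μ] 0)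
    (hη : μ[ηt | m] =ᵐ[μ] 0) (hη1 : μ[ηt1 | m] =ᵐ[μ] 0)
    (α β : ℝ)
    (hsol : (α0 - α) * (1 - ρ0) + (β0 - β) * (π0 * (1 - ρ0)) = 0) :
    μ[fun w => (yt w - ρ0 * yt1 w) - α * (1 - ρ0)
        - β * (xt w - ρ0 * xt1 w) | m] =ᵐ[μ] 0 :=
  continuum_of_solutions_when_equal_rho_general (m0 := m0) μ yt yt1 xt xt1 ωt ωt1 κt κt1 ξt ut ηt
    ηt1 α0 β0 π0 θ0 ρ0 hy hy1 hx hx1 hω hκ hint_ξ hint_u hint_η hint_η1 hξ hu hη hη1 α β hsol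
end

section
/- Under the stronger timing assumption x_t = π⁰ + θ⁰ρ_ω⁰ω_{t-1} + κ_{t-1} (input chosen at t−1), the expression (π⁰/θ⁰)(1 − ρ_x⁰) − (1/θ⁰)(x_t − ρ_x⁰x_{t-1}) + (ω_t − ρ_x⁰ω_{t-1}) + (η_t − ρ_x⁰η_{t-1}) equals −(1/θ⁰)u_{t-1} + ξ_t − ρ_x⁰ξ_{t-1} + η_t − ρ_x⁰η_{t-1} identically, so the pseudo-solution residual contains the lagged innovations u_{t-1} and ξ_{t-1}. -/
/-- Under the stronger timing assumption `x_t = π⁰ + θ⁰ρ_ω⁰ω_{t-1} + κ_{t-1}`,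
the pseudo-solution residual contains lagged innovations `u_{t-1}` and `ξ_{t-1}`. -/
theorem stronger_timing_pseudo_residual
    (x ω κ ξ u η : ℤ → ℝ) (π0 θ0 ρω0 ρx0 : ℝ) (hθ : θ0 ≠ 0)
    (hω : ∀ t, ω t = ρω0 * ω (t - 1) + ξ t)
    (hκ : ∀ t, κ t = ρx0 * κ (t - 1) + u t)
    (hx : ∀ t, x t = π0 + θ0 * ρω0 * ω (t - 1) + κ (t - 1)) :
    ∀ t, (π0 / θ0) * (1 - ρx0) - (1 / θ0) * (x t - ρx0 * x (t - 1))
        + (ω t - ρx0 * ω (t - 1)) + (η t - ρx0 * η (t - 1))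
      = -(1 / θ0) * u (t - 1) + ξ t - ρx0 * ξ (t - 1)
          + η t - ρx0 * η (t - 1) := by
  intro t
  -- Quasi-differencing at rate ρx⁰ reduces κ to its innovation, but `x` only sees `κ` with a lag.
  have hκ_diff : κ (t - 1) - ρx0 * κ (t - 1 - 1) = u (t - 1) := by
    linarith [hκ (t - 1)]
  have hx_diff : x t - ρx0 * x (t - 1)
      = π0 * (1 - ρx0) + θ0 * ρω0 * (ω (t - 1) - ρx0 * ω (t - 1 - 1)) + u (t - 1) := by
    rw [hx t, hx (t - 1), ← hκ_diff]
    ring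
  have hω_diff : ω t - ρx0 * ω (t - 1)
      = ρω0 * (ω (t - 1) - ρx0 * ω (t - 1 - 1)) + (ξ t - ρx0 * ξ (t - 1)) := by
    rw [hω t, hω (t - 1)]
    ring
  rw [hx_diff, hω_diff]
  field_simp
  ring
end

section
/- Under the map π_{yy} = ρ_ω + βθ(ρ_ω − ρ_x), π_{yx} = −β(1 + βθ)(ρ_ω − ρ_x), π_{xy} = θ(ρ_ω − ρ_x), π_{xx} = ρ_x − βθ(ρ_ω − ρ_x), if ρ_ω > ρ_x then θ = π_{xy}/√((π_{yy} − π_{xx})² + 4π_{yx}π_{xy}); if ρ_ω < ρ_x then θ = −π_{xy}/√((π_{yy} − π_{xx})² + 4π_{yx}π_{xy}). In particular the two possible inverse values of θ have opposite signs (when π_{xy} ≠ 0). -/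
/-! The reduced-form matrix `[[π_yy, π_yx], [π_xy, π_xx]]` has eigenvalues `ρ_ω` and `ρ_x`, so its
discriminant `(π_yy - π_xx)² + 4 π_yx π_xy` is `(ρ_ω - ρ_x)²`. Its square root is `|ρ_ω - ρ_x|`, and
`π_xy / |ρ_ω - ρ_x| = θ (ρ_ω - ρ_x) / |ρ_ω - ρ_x|` is `θ` or `-θ` according to the sign of `ρ_ω - ρ_x`. -/

theorem reducedForm_discriminant_eq_sq (β θ ρω ρx : ℝ) :
    ((ρω + β * θ * (ρω - ρx)) - (ρx - β * θ * (ρω - ρx))) ^ 2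
      + 4 * -(β * (1 + β * θ) * (ρω - ρx)) * (θ * (ρω - ρx)) = (ρω - ρx) ^ 2 := by
  ring

theorem mul_div_sqrt_sq_of_pos {d : ℝ} (θ : ℝ) (hd : 0 < d) : θ * d / Real.sqrt (d ^ 2) = θ := by
  rw [Real.sqrt_sq hd.le, mul_div_cancel_right₀ θ hd.ne']

theorem mul_div_sqrt_sq_of_neg {d : ℝ} (θ : ℝ) (hd : d < 0) :
    θ * d / Real.sqrt (d ^ 2) = -θ := by
  rw [Real.sqrt_sq_eq_abs, abs_of_neg hd, div_neg, mul_div_cancel_right₀ θ hd.ne]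

theorem theta_sign_from_reduced_form_general
    (β θ ρω ρx πyy πyx πxy πxx : ℝ)
    (hyy : πyy = ρω + β * θ * (ρω - ρx))
    (hyx : πyx = -(β * (1 + β * θ) * (ρω - ρx)))
    (hxy : πxy = θ * (ρω - ρx))
    (hxx : πxx = ρx - β * θ * (ρω - ρx)) :
    (ρω > ρx → θ = πxy / Real.sqrt ((πyy - πxx) ^ 2 + 4 * πyx * πxy)) ∧
    (ρω < ρx → θ = -(πxy / Real.sqrt ((πyy - πxx) ^ 2 + 4 * πyx * πxy))) := by
  subst hyy hyx hxy hxx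
  rw [reducedForm_discriminant_eq_sq]
  constructor
  · intro h
    rw [mul_div_sqrt_sq_of_pos θ (sub_pos.mpr h)]
  · intro h
    rw [mul_div_sqrt_sq_of_neg θ (sub_neg.mpr h), neg_neg]

/-- The two possible inverse values of `θ` from the reduced form have opposite
signs: if `ρ_ω > ρ_x` then `θ = +π_{xy}/√(⋯)`; if `ρ_ω < ρ_x` then
`θ = −π_{xy}/√(⋯)`. -/
theorem theta_sign_from_reduced_form
    (β θ ρω ρx πyy πyx πxy πxx : ℝ) (hθ : θ ≠ 0) (hρ : ρω ≠ ρx)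
    (hyy : πyy = ρω + β * θ * (ρω - ρx))
    (hyx : πyx = -(β * (1 + β * θ) * (ρω - ρx)))
    (hxy : πxy = θ * (ρω - ρx))
    (hxx : πxx = ρx - β * θ * (ρω - ρx)) :
    (ρω > ρx → θ = πxy / Real.sqrt ((πyy - πxx) ^ 2 + 4 * πyx * πxy)) ∧
    (ρω < ρx → θ = -(πxy / Real.sqrt ((πyy - πxx) ^ 2 + 4 * πyx * πxy))) :=
  theta_sign_from_reduced_form_general β θ ρω ρx πyy πyx πxy πxx hyy hyx hxy hxx
end

section
/- Given reduced-form parameters arising from structural parameters (β, θ, ρ_ω, ρ_x) with θ ≠ 0 and ρ_ω ≠ ρ_x, the inversion formulas hold: β = ½((π_{yy} − π_{xx})/π_{xy} − 1/θ), ρ_ω = ½(π_{yy} + π_{xx} + π_{xy}/θ), and ρ_x = ½(π_{yy} + π_{xx} − π_{xy}/θ). -/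
theorem structural_inversion_formulas_general
    (β θ ρω ρx πyy πxy πxx : ℝ) (hθ : θ ≠ 0) (hρ : ρω ≠ ρx)
    (hyy : πyy = ρω + β * θ * (ρω - ρx))
    (hxy : πxy = θ * (ρω - ρx))
    (hxx : πxx = ρx - β * θ * (ρω - ρx)) :
    β = (1 / 2) * ((πyy - πxx) / πxy - 1 / θ) ∧
    ρω = (1 / 2) * (πyy + πxx + πxy / θ) ∧
    ρx = (1 / 2) * (πyy + πxx - πxy / θ) := by
  have hsum : πyy + πxx = ρω + ρx := by rw [hyy, hxx]; ring
  have hgap : πxy / θ = ρω - ρx := by rw [hxy]; field_simp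
  have hratio : (πyy - πxx) / πxy = 2 * β + 1 / θ := by
    have hgap_ne : ρω - ρx ≠ 0 := sub_ne_zero.mpr hρ
    rw [hyy, hxx, hxy]
    field_simp
    ring
  exact ⟨by rw [hratio]; ring, by rw [hsum, hgap]; ring, by rw [hsum, hgap]; ring⟩

/-- Inversion formulas from reduced-form to structural parameters. -/
theorem structural_inversion_formulas
    (β θ ρω ρx πyy πyx πxy πxx : ℝ) (hθ : θ ≠ 0) (hρ : ρω ≠ ρx)
    (hyy : πyy = ρω + β * θ * (ρω - ρx))
    (hyx : πyx = -(β * (1 + β * θ) * (ρω - ρx)))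
    (hxy : πxy = θ * (ρω - ρx))
    (hxx : πxx = ρx - β * θ * (ρω - ρx)) :
    β = (1 / 2) * ((πyy - πxx) / πxy - 1 / θ) ∧
    ρω = (1 / 2) * (πyy + πxx + πxy / θ) ∧
    ρx = (1 / 2) * (πyy + πxx - πxy / θ) :=
  structural_inversion_formulas_general β θ ρω ρx πyy πxy πxx hθ hρ hyy hxy hxx
end

section
/- The reduced-form-to-structural mapping has exactly two solutions: if (β, θ, ρ_ω, ρ_x) with θ ≠ 0, ρ_ω ≠ ρ_x generates reduced form (π_{yy}, π_{yx}, π_{xy}, π_{xx}), then (β', θ', ρ_ω', ρ_x') := (β + 1/θ, −θ, ρ_x, ρ_ω) generates the SAME reduced form, i.e., π_{yy} = ρ_ω' + β'θ'(ρ_ω' − ρ_x'), π_{yx} = −β'(1 + β'θ')(ρ_ω' − ρ_x'), π_{xy} = θ'(ρ_ω' − ρ_x'), and π_{xx} = ρ_x' − β'θ'(ρ_ω' − ρ_x'). -/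
/-! Swapping `ρω` and `ρx` flips the sign of `ρω - ρx`; with `θ' = -θ` this leaves `π_xy`
unchanged, and the remaining entries are unchanged as soon as `β' θ = 1 + β θ`, which for `θ ≠ 0`
forces `β' = β + 1/θ`. -/

/-- Components in the order `(π_yy, π_yx, π_xy, π_xx)`. -/
def reducedForm {R : Type*} [CommRing R] (β θ ρω ρx : R) : R × R × R × R :=
  (ρω + β * θ * (ρω - ρx), -(β * (1 + β * θ) * (ρω - ρx)), θ * (ρω - ρx),
    ρx - β * θ * (ρω - ρx))

theorem reducedForm_neg_swap_eq {R : Type*} [CommRing R] {β β' θ : R} (ρω ρx : R)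
    (h : β' * θ = 1 + β * θ) :
    reducedForm β' (-θ) ρx ρω = reducedForm β θ ρω ρx := by
  simp only [reducedForm, Prod.mk.injEq]
  refine ⟨?_, ?_, ?_, ?_⟩
  · linear_combination (ρω - ρx) * h
  · linear_combination (β + β') * (ρx - ρω) * h
  · ring
  · linear_combination (ρx - ρω) * h

theorem two_structural_solutions_same_reduced_form_general
    (β θ ρω ρx πyy πyx πxy πxx : ℝ) (hθ : θ ≠ 0)
    (hyy : πyy = ρω + β * θ * (ρω - ρx))
    (hyx : πyx = -(β * (1 + β * θ) * (ρω - ρx)))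
    (hxy : πxy = θ * (ρω - ρx))
    (hxx : πxx = ρx - β * θ * (ρω - ρx)) :
    πyy = ρx + (β + 1 / θ) * (-θ) * (ρx - ρω) ∧
    πyx = -((β + 1 / θ) * (1 + (β + 1 / θ) * (-θ)) * (ρx - ρω)) ∧
    πxy = (-θ) * (ρx - ρω) ∧
    πxx = ρω - (β + 1 / θ) * (-θ) * (ρx - ρω) := by
  have hβ' : (β + 1 / θ) * θ = 1 + β * θ := by field_simp; ring
  have h := reducedForm_neg_swap_eq ρω ρx hβ'
  simp only [reducedForm, Prod.mk.injEq] at h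
  obtain ⟨h₁, h₂, h₃, h₄⟩ := h
  exact ⟨hyy.trans h₁.symm, hyx.trans h₂.symm, hxy.trans h₃.symm, hxx.trans h₄.symm⟩

/-- The pseudo-structural parameters `(β + 1/θ, −θ, ρ_x, ρ_ω)` generate the same
reduced-form parameters as `(β, θ, ρ_ω, ρ_x)`. -/
theorem two_structural_solutions_same_reduced_form
    (β θ ρω ρx πyy πyx πxy πxx : ℝ) (hθ : θ ≠ 0) (hρ : ρω ≠ ρx)
    (hyy : πyy = ρω + β * θ * (ρω - ρx))
    (hyx : πyx = -(β * (1 + β * θ) * (ρω - ρx)))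
    (hxy : πxy = θ * (ρω - ρx))
    (hxx : πxx = ρx - β * θ * (ρω - ρx)) :
    πyy = ρx + (β + 1 / θ) * (-θ) * (ρx - ρω) ∧
    πyx = -((β + 1 / θ) * (1 + (β + 1 / θ) * (-θ)) * (ρx - ρω)) ∧
    πxy = (-θ) * (ρx - ρω) ∧
    πxx = ρω - (β + 1 / θ) * (-θ) * (ρx - ρω) :=
  two_structural_solutions_same_reduced_form_general β θ ρω ρx πyy πyx πxy πxx hθ hyy hyx hxy hxx
end

section
/- If the innovation terms satisfy E[u_t | I_{t-1}] = 0, E[η_t | I_{t-1}] = 0, and E[η_{t-1} | I_{t-1}] = 0 for a σ-algebra I_{t-1}, then E[−(1/θ⁰)u_t + η_t − ρ_x⁰η_{t-1} | I_{t-1}] = 0; combined with the algebraic identity of Theorem 1, this shows the conditional moment condition E[(y_t − ρ y_{t-1}) − α(1 − ρ) − β(x_t − ρ x_{t-1}) | I_{t-1}] = 0 holds at the pseudo-parameters (α, β, ρ) = (α⁰ − π⁰/θ⁰, β⁰ + 1/θ⁰, ρ_x⁰). -/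
open MeasureTheory

/-! Quasi-differencing the outcome equation with `ρ = ρ_x⁰` and substituting
`ω_t − ρ_x⁰ ω_{t-1} = (x_t − ρ_x⁰ x_{t-1} − π⁰(1 − ρ_x⁰) − u_t) / θ⁰` turns the residual at the
pseudo-parameters into the composite innovation `−u_t/θ⁰ + η_t − ρ_x⁰ η_{t-1}`, pointwise.
Each of its three terms has zero conditional mean, and conditional expectation is linear. -/

section CondExpZero

variable {Ω E : Type*} [NormedAddCommGroup E] [NormedSpace ℝ E] [CompleteSpace E]
  {m m0 : MeasurableSpace Ω} {μ : Measure Ω} {f g : Ω → E}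

theorem condExp_add_ae_eq_zero (hf : Integrable f μ) (hg : Integrable g μ)
    (hf0 : μ[f | m] =ᵐ[μ] 0) (hg0 : μ[g | m] =ᵐ[μ] 0) : μ[f + g | m] =ᵐ[μ] 0 := by
  filter_upwards [condExp_add hf hg m, hf0, hg0] with w hw hfw hgw
  simp [hw, hfw, hgw]

theorem condExp_sub_ae_eq_zero (hf : Integrable f μ) (hg : Integrable g μ)
    (hf0 : μ[f | m] =ᵐ[μ] 0) (hg0 : μ[g | m] =ᵐ[μ] 0) : μ[f - g | m] =ᵐ[μ] 0 := by
  filter_upwards [condExp_sub hf hg m, hf0, hg0] with w hw hfw hgw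
  simp [hw, hfw, hgw]

theorem condExp_smul_ae_eq_zero (c : ℝ) (hf0 : μ[f | m] =ᵐ[μ] 0) :
    μ[c • f | m] =ᵐ[μ] 0 := by
  filter_upwards [condExp_smul c f m, hf0] with w hw hfw
  simp [hw, hfw]

end CondExpZero

theorem quasiDifference_residual_eq_innovation
    {y y1 x x1 ω ω1 κ κ1 u η η1 α0 β0 π0 θ0 ρ : ℝ} (hθ : θ0 ≠ 0)
    (hy : y = α0 + β0 * x + ω + η) (hy1 : y1 = α0 + β0 * x1 + ω1 + η1)
    (hx : x = π0 + θ0 * ω + κ) (hx1 : x1 = π0 + θ0 * ω1 + κ1) (hκ : κ = ρ * κ1 + u) :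
    (y - ρ * y1) - (α0 - π0 / θ0) * (1 - ρ) - (β0 + 1 / θ0) * (x - ρ * x1)
      = -(1 / θ0) * u + η - ρ * η1 := by
  subst hy hy1 hx hx1 hκ
  field_simp
  ring

theorem pseudo_solution_conditional_moment_zero_general
    {Ω : Type*} {m m0 : MeasurableSpace Ω}
    (μ : Measure Ω)
    (yt yt1 xt xt1 ωt ωt1 κt κt1 ut ηt ηt1 : Ω → ℝ)
    (α0 β0 π0 θ0 ρx0 : ℝ) (hθ : θ0 ≠ 0)
    (hy : ∀ w, yt w = α0 + β0 * xt w + ωt w + ηt w)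
    (hy1 : ∀ w, yt1 w = α0 + β0 * xt1 w + ωt1 w + ηt1 w)
    (hx : ∀ w, xt w = π0 + θ0 * ωt w + κt w)
    (hx1 : ∀ w, xt1 w = π0 + θ0 * ωt1 w + κt1 w)
    (hκ : ∀ w, κt w = ρx0 * κt1 w + ut w)
    (hint_u : Integrable ut μ) (hint_η : Integrable ηt μ)
    (hint_η1 : Integrable ηt1 μ)
    (hu : μ[ut | m] =ᵐ[μ] 0) (hη : μ[ηt | m] =ᵐ[μ] 0)
    (hη1 : μ[ηt1 | m] =ᵐ[μ] 0) :
    μ[fun w => -(1 / θ0) * ut w + ηt w - ρx0 * ηt1 w | m] =ᵐ[μ] 0 ∧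
    μ[fun w => (yt w - ρx0 * yt1 w) - (α0 - π0 / θ0) * (1 - ρx0)
        - (β0 + 1 / θ0) * (xt w - ρx0 * xt1 w) | m] =ᵐ[μ] 0 := by
  have hinnovation : μ[(-(1 / θ0)) • ut + ηt - ρx0 • ηt1 | m] =ᵐ[μ] 0 :=
    condExp_sub_ae_eq_zero ((hint_u.smul _).add hint_η) (hint_η1.smul _)
      (condExp_add_ae_eq_zero (hint_u.smul _) hint_η (condExp_smul_ae_eq_zero _ hu) hη)
      (condExp_smul_ae_eq_zero _ hη1)
  have hresidual : (fun w => (yt w - ρx0 * yt1 w) - (α0 - π0 / θ0) * (1 - ρx0)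
      - (β0 + 1 / θ0) * (xt w - ρx0 * xt1 w))
      = (-(1 / θ0)) • ut + ηt - ρx0 • ηt1 := funext fun w =>
    quasiDifference_residual_eq_innovation hθ (hy w) (hy1 w) (hx w) (hx1 w) (hκ w)
  exact ⟨hinnovation, hresidual ▸ hinnovation⟩

/-- The conditional moment condition holds at the pseudo-parameters
`(α, β, ρ) = (α⁰ − π⁰/θ⁰, β⁰ + 1/θ⁰, ρ_x⁰)` when the innovations `u_t`, `η_t`,
`η_{t-1}` have zero conditional mean given `I_{t-1}`. -/
theorem pseudo_solution_conditional_moment_zero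
    {Ω : Type*} {m m0 : MeasurableSpace Ω} (hm : m ≤ m0)
    (μ : Measure Ω) [IsProbabilityMeasure μ]
    (yt yt1 xt xt1 ωt ωt1 κt κt1 ξt ut ηt ηt1 : Ω → ℝ)
    (α0 β0 π0 θ0 ρω0 ρx0 : ℝ) (hθ : θ0 ≠ 0)
    (hy : ∀ w, yt w = α0 + β0 * xt w + ωt w + ηt w)
    (hy1 : ∀ w, yt1 w = α0 + β0 * xt1 w + ωt1 w + ηt1 w)
    (hx : ∀ w, xt w = π0 + θ0 * ωt w + κt w)
    (hx1 : ∀ w, xt1 w = π0 + θ0 * ωt1 w + κt1 w)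
    (hω : ∀ w, ωt w = ρω0 * ωt1 w + ξt w)
    (hκ : ∀ w, κt w = ρx0 * κt1 w + ut w)
    (hint_y : Integrable yt μ) (hint_y1 : Integrable yt1 μ)
    (hint_x : Integrable xt μ) (hint_x1 : Integrable xt1 μ)
    (hint_u : Integrable ut μ) (hint_η : Integrable ηt μ)
    (hint_η1 : Integrable ηt1 μ)
    (hu : μ[ut | m] =ᵐ[μ] 0) (hη : μ[ηt | m] =ᵐ[μ] 0)
    (hη1 : μ[ηt1 | m] =ᵐ[μ] 0) :
    μ[fun w => -(1 / θ0) * ut w + ηt w - ρx0 * ηt1 w | m] =ᵐ[μ] 0 ∧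
    μ[fun w => (yt w - ρx0 * yt1 w) - (α0 - π0 / θ0) * (1 - ρx0)
        - (β0 + 1 / θ0) * (xt w - ρx0 * xt1 w) | m] =ᵐ[μ] 0 :=
  pseudo_solution_conditional_moment_zero_general (m0 := m0) μ yt yt1 xt xt1 ωt ωt1 κt κt1 ut ηt ηt1
    α0 β0 π0 θ0 ρx0 hθ hy hy1 hx hx1 hκ hint_u hint_η hint_η1 hu hη hη1
end
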